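/- arXiv:0711.5014 — 3 statements merged into one kernel-verified Lean document; each statement's English description precedes it below -/
import Mathlib

section
/- Let p be a prime, let P be a finite p-group, let Q be a subgroup of P, and let φ : Q → P be an injective group homomorphism. Let i_P : P → Sym(P) be the Cayley embedding of P into the symmetric group on the underlying set of P. Then there exists an element g ∈ Sym(P) such that for all q ∈ Q, i_P(φ(q)) = g · i_P(q) · g⁻¹. -/
/-!
Left multiplication by `Q` and left multiplication through `φ` are two free actions of `Q` on `P`.
Choosing right transversals `T` of `Q` and `T'` of `φ(Q)` writes them as `Q × T` and `Q × T'` with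
`Q` acting on the first factor. Both transversals have `|P| / |Q|` elements, so the two actions are
isomorphic, and the isomorphism is the conjugating permutation.
-/

namespace Subgroup

variable {G : Type*} [Group G]

theorem index_eq_of_mulEquiv [Finite G] {H K : Subgroup G} (e : H ≃* K) : H.index = K.index :=
  Nat.eq_of_mul_eq_mul_right Nat.card_pos <| by
    rw [index_mul_card, Nat.card_congr e.toEquiv, index_mul_card]

theorem exists_perm_mul_left_eq [Finite G] {H K : Subgroup G} (e : H ≃* K) :
    ∃ g : Equiv.Perm G, ∀ (h : H) (x : G), g (h * x) = e h * g x := by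
  obtain ⟨T, hT, -⟩ := H.exists_isComplement_right 1
  obtain ⟨T', hT', -⟩ := K.exists_isComplement_right 1
  have : Finite T := Subtype.finite
  have : Finite T' := Subtype.finite
  obtain ⟨f⟩ : Nonempty (T ≃ T') := Finite.card_eq.mp <| by
    rw [hT.card_right, hT'.card_right, index_eq_of_mulEquiv e]
  refine ⟨hT.equiv.trans ((e.toEquiv.prodCongr f).trans hT'.equiv.symm), fun h x => ?_⟩
  simp only [Equiv.trans_apply, hT.equiv_mul_left, Equiv.prodCongr_apply, Prod.map_apply,
    MulEquiv.toEquiv_eq_coe, MulEquiv.coe_toEquiv, map_mul]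
  -- `hT'.equiv.symm (k, t)` unfolds to `k * t`
  exact mul_assoc (e h : G) (e (hT.equiv x).1) (f (hT.equiv x).2)

end Subgroup

theorem stmt_0_general (P : Type) [Group P] [Finite P]
    (Q : Subgroup P) (φ : Q →* P) (hφ : Function.Injective φ) :
    ∃ g : Equiv.Perm P, ∀ q : Q,
      MulAction.toPermHom P P (φ q) = g * MulAction.toPermHom P P (q : P) * g⁻¹ := by
  obtain ⟨g, hg⟩ := Subgroup.exists_perm_mul_left_eq (MonoidHom.ofInjective hφ)
  refine ⟨g, fun q => ?_⟩
  rw [eq_mul_inv_iff_mul_eq]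
  ext x
  simp [hg, MonoidHom.ofInjective_apply]

/-- **Lemma 4 of Leary–Schuster–Yagita.**
Let `p` be a prime, `P` a finite `p`-group, `Q` a subgroup of `P`, and
`φ : Q → P` an injective group homomorphism.  Let `i_P : P → Sym(P)` be the
Cayley embedding (left multiplication).  Then there is `g ∈ Sym(P)` with
`i_P (φ q) = g * i_P q * g⁻¹` for all `q ∈ Q`. -/
theorem stmt_0 (p : ℕ) (hp : p.Prime) (P : Type) [Group P] [Finite P]
    (hP : IsPGroup p P) (Q : Subgroup P) (φ : Q →* P) (hφ : Function.Injective φ) :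
    ∃ g : Equiv.Perm P, ∀ q : Q,
      MulAction.toPermHom P P (φ q) = g * MulAction.toPermHom P P (q : P) * g⁻¹ :=
  stmt_0_general P Q φ hφ
end

section
/- Let p be a prime, let P be a finite p-group, let G = Sym(P) be the symmetric group on the underlying set of P, and regard P as a subgroup of G via the Cayley embedding i_P. Then for every n ≥ 0, every class in the image of the restriction map i_P^* : H^n(G; F_p) → H^n(P; F_p) is universally stable: for every x ∈ H^n(G; F_p), every subgroup Q ≤ P, and every injective group homomorphism ψ : Q → P, one has ψ^*(i_P^*(x)) = Res^P_Q(i_P^*(x)) in H^n(Q; F_p). -/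
/-!
If `ψ : Q → P` is injective, left multiplication through `ψ` and through the inclusion make `P`
into two free `Q`-sets with the same number `|P : Q|` of orbits, so some `σ ∈ Sym(P)` intertwines
them: `i_P ∘ ψ = c_σ ∘ i_P|_Q`. Inner automorphisms act trivially on group cohomology, hence
`ψ^* i_P^* x = (i_P|_Q)^* c_σ^* x = Res^P_Q i_P^* x`.

That conjugation `c_a` induces the identity is witnessed on inhomogeneous cochains by the homotopy
`(h φ)(g₁, …, gₙ) = ∑ᵢ (-1)ⁱ φ(g₁, …, gᵢ, a⁻¹, a gᵢ₊₁ a⁻¹, …, a gₙ a⁻¹)`: in `d h + h d` the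
faces of the insertions cancel in pairs, except for those producing `c_a^* φ` and `φ`.
-/

open CategoryTheory groupCohomology

noncomputable section

variable {k : Type} [CommRing k]

/-- Precomposition with a group homomorphism `f : H →* G` on inhomogeneous cochains
with trivial coefficients. -/
def trivialCochainsMap {G H : Type} [Group G] [Group H] (f : H →* G) :
    inhomogeneousCochains (Rep.trivial k G k) ⟶ inhomogeneousCochains (Rep.trivial k H k) where
  f n := ModuleCat.ofHom
    { toFun := fun φ (v : Fin n → H) => φ (fun i => f (v i))
      map_add' := fun _ _ => rfl
      map_smul' := fun _ _ => rfl }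
  comm' i j hij := by
    obtain rfl : i + 1 = j := hij
    ext φ g
    simp [inhomogeneousCochains.d_hom_apply, CochainComplex.of.d]
    refine Finset.sum_congr rfl fun j _ => ?_
    have h : (fun l => f (Fin.contractNth j (· * ·) g l))
        = Fin.contractNth j (· * ·) (fun l => f (g l)) := by
      funext l
      unfold Fin.contractNth
      split_ifs <;> simp [map_mul]
    rw [h]

/-- The map `f^* : Hⁿ(G; k) → Hⁿ(H; k)` on group cohomology with (trivial) coefficients
in `k` induced by a group homomorphism `f : H →* G`. -/
def cohomologyRes {G H : Type} [Group G] [Group H] (f : H →* G) (n : ℕ) :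
    groupCohomology (Rep.trivial k G k) n ⟶ groupCohomology (Rep.trivial k H k) n :=
  HomologicalComplex.homologyMap (trivialCochainsMap f) n


open Finset

-- Cochains of degree `n` are evaluated on sequences `ℕ → G` through their first `n` entries, so
-- that faces and insertions act on `ℕ → G` without casts between `Fin n` and `Fin (n + 1)`.

def extendByOne {G : Type*} [One G] {n : ℕ} (g : Fin n → G) : ℕ → G := fun m =>
  if h : m < n then g ⟨m, h⟩ else 1

lemma restrict_extendByOne {G : Type*} [One G] {n : ℕ} (g : Fin n → G) :
    (fun m : Fin n => extendByOne g m) = g := by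
  funext m
  simp [extendByOne]

def mulAdjacent {G : Type*} [Mul G] (j : ℕ) (f : ℕ → G) : ℕ → G := fun m =>
  if m < j then f m else if m = j then f m * f (m + 1) else f (m + 1)

lemma contractNth_eq_mulAdjacent {G : Type*} [Mul G] {n : ℕ} (f : ℕ → G) (j : Fin (n + 1)) :
    Fin.contractNth j (· * ·) (fun m : Fin (n + 1) => f m) = fun m : Fin n => mulAdjacent j f m :=
  rfl

section InsertConj

variable {G : Type*} [Group G] (a : G) {i j : ℕ}

def insertConj (i : ℕ) (f : ℕ → G) : ℕ → G := fun m =>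
  if m < i then f m else if m = i then a⁻¹ else a * f (m - 1) * a⁻¹

lemma insertConj_zero_succ (f : ℕ → G) (m : ℕ) : insertConj a 0 f (m + 1) = a * f m * a⁻¹ := by
  simp [insertConj]

lemma insertConj_succ_succ (i : ℕ) (f : ℕ → G) (m : ℕ) :
    insertConj a (i + 1) f (m + 1) = insertConj a i (fun l => f (l + 1)) m := by
  simp only [insertConj, Nat.add_lt_add_iff_right, Nat.add_right_cancel_iff, Nat.add_sub_cancel]
  split_ifs <;> first | rfl | (congr; omega)

lemma mulAdjacent_insertConj_of_lt (hji : j < i) (f : ℕ → G) :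
    mulAdjacent j (insertConj a (i + 1) f) = insertConj a i (mulAdjacent j f) := by
  funext m
  rcases m with _ | m <;> simp only [mulAdjacent, insertConj, Nat.add_sub_cancel] <;>
    split_ifs <;> first | rfl | omega

lemma mulAdjacent_succ_insertConj_of_le (hij : i ≤ j) (f : ℕ → G) :
    mulAdjacent (j + 1) (insertConj a i f) = insertConj a i (mulAdjacent j f) := by
  funext m
  rcases m with _ | m <;> simp only [mulAdjacent, insertConj, Nat.add_sub_cancel] <;>
    split_ifs <;> first | rfl | omega | group

lemma mulAdjacent_insertConj_self (i : ℕ) (f : ℕ → G) :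
    mulAdjacent i (insertConj a i f) = mulAdjacent i (insertConj a (i + 1) f) := by
  funext m
  rcases m with _ | m <;> simp only [mulAdjacent, insertConj, Nat.add_sub_cancel] <;>
    split_ifs <;> first | rfl | omega | group

lemma mulAdjacent_insertConj_self_apply_of_lt {m : ℕ} (hm : m < i) (f : ℕ → G) :
    mulAdjacent i (insertConj a i f) m = f m := by
  simp [mulAdjacent, insertConj, hm]

lemma insertConj_congr {n : ℕ} {f₁ f₂ : ℕ → G} (h : ∀ m < n, f₁ m = f₂ m) (hi : i ≤ n) :
    ∀ m < n + 1, insertConj a i f₁ m = insertConj a i f₂ m := by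
  intro m hm
  simp only [insertConj]
  split_ifs
  · exact h m (by omega)
  · rfl
  · rw [h (m - 1) (by omega)]

end InsertConj

-- `T i j` and `V i j` stand for "face `j` after insertion `i`" and "insertion `i` after face `j`";
-- the hypotheses are the simplicial identities between them.
lemma sum_range_sum_range_neg_one_pow_eq {R : Type*} [CommRing R] (m : ℕ) (T V : ℕ → ℕ → R)
    (hlt : ∀ i j, j < i → i < m → T (i + 1) j = V i j)
    (hge : ∀ i j, i ≤ j → j < m → T i (j + 1) = V i j)
    (hdiag : ∀ i < m, T i i = T (i + 1) i) :
    ∑ i ∈ range (m + 1), ∑ j ∈ range (m + 1), (-1) ^ (i + j) * T i j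
      = T m m - ∑ i ∈ range m, ∑ j ∈ range m, (-1) ^ (i + j) * V i j := by
  induction m with
  | zero => simp
  | succ m ih =>
    have ih := ih (fun i j hji hi => hlt i j hji (by omega))
      (fun i j hij hj => hge i j hij (by omega)) (fun i hi => hdiag i (by omega))
    have col : ∑ i ∈ range (m + 1), (-1) ^ (i + (m + 1)) * T i (m + 1)
        = -∑ i ∈ range (m + 1), (-1) ^ (i + m) * V i m := by
      rw [← sum_neg_distrib]
      refine sum_congr rfl fun i hi => ?_
      rw [hge i m (Nat.lt_succ_iff.mp (mem_range.mp hi)) (by omega), ← add_assoc, pow_succ]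
      ring
    have row : ∑ j ∈ range (m + 1), (-1) ^ (m + 1 + j) * T (m + 1) j
        = -∑ j ∈ range m, (-1) ^ (m + j) * V m j + (-1) ^ (m + 1 + m) * T m m := by
      rw [sum_range_succ, ← hdiag m (by omega), ← sum_neg_distrib]
      congr 1
      refine sum_congr rfl fun j hj => ?_
      rw [hlt m j (mem_range.mp hj) (by omega), add_right_comm, pow_succ]
      ring
    have hsq : (-1 : R) ^ (m + m) = 1 := by rw [← two_mul, pow_mul, neg_one_sq, one_pow]
    simp only [sum_range_succ _ (m + 1), sum_add_distrib]
    rw [ih, col, row]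
    simp only [sum_range_succ _ m, sum_add_distrib]
    linear_combination (T (m + 1) (m + 1) - T m m) * hsq

section ConjHomotopy

variable {G : Type} [Group G] (a : G)

-- Only `m = n + 1` is used; a free `m` spares `conjHomotopy` a transport along `j + 1 = i`.
def conjHomotopyLin (m n : ℕ) : ((Fin m → G) → k) →ₗ[k] ((Fin n → G) → k) :=
  ∑ i ∈ range m, (-1 : k) ^ i •
    LinearMap.funLeft k k (fun (g : Fin n → G) (t : Fin m) => insertConj a i (extendByOne g) t)

lemma conjHomotopyLin_apply_restrict (n : ℕ) (φ : (Fin (n + 1) → G) → k) (f : ℕ → G) :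
    conjHomotopyLin a (n + 1) n φ (fun t : Fin n => f t)
      = ∑ i ∈ range (n + 1), (-1 : k) ^ i * φ (fun t => insertConj a i f t) := by
  simp only [conjHomotopyLin, LinearMap.sum_apply, Finset.sum_apply, LinearMap.smul_apply,
    LinearMap.funLeft_apply, Pi.smul_apply, smul_eq_mul]
  refine sum_congr rfl fun i hi => ?_
  congr 2
  funext t
  refine insertConj_congr a (fun m hm => ?_) (Nat.lt_succ_iff.mp (mem_range.mp hi)) t t.isLt
  simp [extendByOne, hm]

lemma sum_d_insertConj {m : ℕ} (φ : (Fin m → G) → k) (f : ℕ → G) :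
    ∑ i ∈ range (m + 1), (-1 : k) ^ i *
        (inhomogeneousCochains.d (Rep.trivial k G k) m).hom φ (fun t => insertConj a i f t)
      = φ (fun t => a * f t * a⁻¹) - φ (fun t => f t)
        - ∑ i ∈ range m, (-1 : k) ^ i * φ (fun t => insertConj a i (fun l => f (l + 1)) t)
        + ∑ i ∈ range m, ∑ j ∈ range m,
            (-1 : k) ^ (i + j) * φ (fun t => insertConj a i (mulAdjacent j f) t) := by
  simp only [inhomogeneousCochains.d_hom_apply, Representation.trivial_apply,
    contractNth_eq_mulAdjacent, smul_eq_mul]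
  have h_shift : ∑ i ∈ range (m + 1), (-1 : k) ^ i * φ (fun t : Fin m => insertConj a i f t.succ)
      = φ (fun t => a * f t * a⁻¹)
        - ∑ i ∈ range m, (-1 : k) ^ i * φ (fun t => insertConj a i (fun l => f (l + 1)) t) := by
    simp only [sum_range_succ', Fin.val_succ, insertConj_succ_succ, insertConj_zero_succ, pow_succ,
      pow_zero, one_mul, mul_neg_one, neg_mul, sum_neg_distrib]
    ring
  have h_faces : ∑ i ∈ range (m + 1), (-1 : k) ^ i * ∑ j : Fin (m + 1),
        (-1 : k) ^ ((j : ℕ) + 1) * φ (fun t => mulAdjacent j (insertConj a i f) t)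
      = ∑ i ∈ range m, ∑ j ∈ range m,
          (-1 : k) ^ (i + j) * φ (fun t => insertConj a i (mulAdjacent j f) t)
        - φ (fun t => f t) := by
    have h_corner : φ (fun t : Fin m => mulAdjacent m (insertConj a m f) t) = φ (fun t => f t) :=
      congrArg φ (funext fun t => mulAdjacent_insertConj_self_apply_of_lt a t.isLt f)
    rw [← h_corner, ← neg_sub, ← sum_range_sum_range_neg_one_pow_eq m
      (fun i j => φ (fun t => mulAdjacent j (insertConj a i f) t))
      (fun i j => φ (fun t => insertConj a i (mulAdjacent j f) t))
      (fun i j hji _ => by rw [mulAdjacent_insertConj_of_lt a hji])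
      (fun i j hij _ => by rw [mulAdjacent_succ_insertConj_of_le a hij])
      (fun i _ => by rw [mulAdjacent_insertConj_self]), ← sum_neg_distrib]
    refine sum_congr rfl fun i _ => ?_
    rw [Fin.sum_univ_eq_sum_range (fun j => (-1 : k) ^ (j + 1) *
      φ (fun t => mulAdjacent j (insertConj a i f) t)), mul_sum, ← sum_neg_distrib]
    refine sum_congr rfl fun j _ => ?_
    ring
  simp only [mul_add, sum_add_distrib, h_shift, h_faces]
  ring

lemma d_conjHomotopyLin_apply (n : ℕ) (φ : (Fin (n + 1) → G) → k) (f : ℕ → G) :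
    (inhomogeneousCochains.d (Rep.trivial k G k) n).hom (conjHomotopyLin a (n + 1) n φ)
        (fun t => f t)
      = ∑ i ∈ range (n + 1), (-1 : k) ^ i * φ (fun t => insertConj a i (fun l => f (l + 1)) t)
        - ∑ i ∈ range (n + 1), ∑ j ∈ range (n + 1),
            (-1 : k) ^ (i + j) * φ (fun t => insertConj a i (mulAdjacent j f) t) := by
  simp only [inhomogeneousCochains.d_hom_apply, Representation.trivial_apply,
    contractNth_eq_mulAdjacent, smul_eq_mul, Fin.val_succ, conjHomotopyLin_apply_restrict]
  rw [conjHomotopyLin_apply_restrict a n φ (fun l => f (l + 1)),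
    Fin.sum_univ_eq_sum_range (fun j => (-1 : k) ^ (j + 1) * ∑ i ∈ range (n + 1),
      (-1 : k) ^ i * φ (fun t => insertConj a i (mulAdjacent j f) t)), sum_comm, sub_eq_add_neg,
    ← sum_neg_distrib]
  congr 1
  refine sum_congr rfl fun i _ => ?_
  rw [mul_sum, ← sum_neg_distrib]
  refine sum_congr rfl fun j _ => ?_
  ring

def conjHomotopy :
    Homotopy (trivialCochainsMap (k := k) (MulAut.conj a).toMonoidHom) (𝟙 _) where
  hom i j := if j + 1 = i then ModuleCat.ofHom (conjHomotopyLin a i j) else 0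
  zero _ _ h := if_neg h
  comm n := by
    rw [Homotopy.dNext_cochainComplex]
    rcases n with _ | n
    on_goal 1 => rw [Homotopy.prevD_zero_cochainComplex, add_zero]
    on_goal 2 => rw [Homotopy.prevD_succ_cochainComplex]
    all_goals
      refine ModuleCat.hom_ext (LinearMap.ext fun φ => funext fun g => ?_)
      simp only [CochainComplex.of_d, ↓reduceIte, ModuleCat.hom_add, ModuleCat.hom_comp,
        ModuleCat.hom_ofHom, HomologicalComplex.id_f, ModuleCat.hom_id, LinearMap.add_apply,
        LinearMap.comp_apply, LinearMap.id_apply, Pi.add_apply]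
      change φ (fun i => a * g i * a⁻¹) = _
      rw [← restrict_extendByOne g, conjHomotopyLin_apply_restrict, sum_d_insertConj]
    · simp
    · rw [d_conjHomotopyLin_apply]
      ring

lemma cohomologyRes_conj (n : ℕ) :
    cohomologyRes (k := k) (MulAut.conj a).toMonoidHom n = 𝟙 _ := by
  rw [cohomologyRes, (conjHomotopy a).homologyMap_eq, HomologicalComplex.homologyMap_id]
  rfl

end ConjHomotopy

lemma cohomologyRes_comp_apply {G H K : Type} [Group G] [Group H] [Group K]
    (f : H →* G) (e : K →* H) (n : ℕ) (x : groupCohomology (Rep.trivial k G k) n) :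
    cohomologyRes e n (cohomologyRes f n x) = cohomologyRes (f.comp e) n x := by
  change _ = HomologicalComplex.homologyMap (trivialCochainsMap f ≫ trivialCochainsMap e) n x
  rw [HomologicalComplex.homologyMap_comp]
  rfl

theorem Subgroup.exists_perm_mul_left_eq_s2 {P : Type*} [Group P] {K L : Subgroup P}
    [K.FiniteIndex] (e : K ≃* L) (h : K.index = L.index) :
    ∃ σ : Equiv.Perm P, ∀ (x : K) (y : P), σ (x * y) = e x * σ y := by
  obtain ⟨S, hS, -⟩ := K.exists_isComplement_right 1
  obtain ⟨T, hT, -⟩ := L.exists_isComplement_right 1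
  have : L.FiniteIndex := ⟨h ▸ FiniteIndex.index_ne_zero⟩
  have : Finite S := hS.finite_right.to_subtype
  have : Finite T := hT.finite_right.to_subtype
  obtain ⟨t⟩ : Nonempty (S ≃ T) := Finite.card_eq.mp (by rw [hS.card_right, hT.card_right, h])
  refine ⟨hS.equiv.trans ((e.toEquiv.prodCongr t).trans hT.equiv.symm), fun x y => ?_⟩
  simp only [Equiv.trans_apply, hS.equiv_mul_left, MulEquiv.toEquiv_eq_coe, Equiv.prodCongr_apply,
    Prod.map, MulEquiv.coe_toEquiv, map_mul]
  exact mul_assoc (e x : P) _ _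

theorem exists_perm_toPermHom_comp_eq {P Q : Type*} [Group P] [Finite P] [Group Q]
    {f₁ f₂ : Q →* P} (hf₁ : Function.Injective f₁) (hf₂ : Function.Injective f₂) :
    ∃ σ : Equiv.Perm P, (MulAction.toPermHom P P).comp f₂
      = (MulAut.conj σ).toMonoidHom.comp ((MulAction.toPermHom P P).comp f₁) := by
  have h_card : Nat.card f₁.range = Nat.card f₂.range :=
    (Nat.card_congr (MonoidHom.ofInjective hf₁).toEquiv.symm).trans
      (Nat.card_congr (MonoidHom.ofInjective hf₂).toEquiv)
  have h_index : f₁.range.index = f₂.range.index :=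
    Nat.eq_of_mul_eq_mul_left Nat.card_pos <| by
      rw [Subgroup.card_mul_index, h_card, Subgroup.card_mul_index]
  obtain ⟨σ, hσ⟩ := Subgroup.exists_perm_mul_left_eq_s2
    ((MonoidHom.ofInjective hf₁).symm.trans (MonoidHom.ofInjective hf₂)) h_index
  refine ⟨σ, MonoidHom.ext fun q => Equiv.ext fun y => ?_⟩
  simpa [MonoidHom.ofInjective_apply] using (hσ (MonoidHom.ofInjective hf₁ q) (σ⁻¹ y)).symm

theorem stmt_2_general (p : ℕ) (P : Type) [Group P] [Finite P] (n : ℕ)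
    (x : groupCohomology (Rep.trivial (ZMod p) (Equiv.Perm P) (ZMod p)) n)
    (Q : Subgroup P) (ψ : Q →* P) (hψ : Function.Injective ψ) :
    cohomologyRes ψ n (cohomologyRes (MulAction.toPermHom P P) n x)
      = cohomologyRes Q.subtype n (cohomologyRes (MulAction.toPermHom P P) n x) := by
  obtain ⟨σ, hσ⟩ := exists_perm_toPermHom_comp_eq Q.subtype_injective hψ
  rw [cohomologyRes_comp_apply, cohomologyRes_comp_apply, hσ, ← cohomologyRes_comp_apply,
    cohomologyRes_conj, ModuleCat.id_apply]

/-- **Theorem 3 of Leary–Schuster–Yagita** (mod-p version).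
Let `P` be a finite `p`-group, `G = Sym(P)` the symmetric group on the underlying
set of `P`, with `P ≤ G` via the Cayley embedding `i_P`.  Every class in the image
of `i_P^* : Hⁿ(G; 𝔽_p) → Hⁿ(P; 𝔽_p)` is universally stable: for every subgroup
`Q ≤ P` and injective homomorphism `ψ : Q → P`, `ψ^*` and `Res^P_Q` agree on it. -/
theorem stmt_2 (p : ℕ) (hp : p.Prime) (P : Type) [Group P] [Finite P]
    (hP : IsPGroup p P) (n : ℕ)
    (x : groupCohomology (Rep.trivial (ZMod p) (Equiv.Perm P) (ZMod p)) n)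
    (Q : Subgroup P) (ψ : Q →* P) (hψ : Function.Injective ψ) :
    cohomologyRes ψ n (cohomologyRes (MulAction.toPermHom P P) n x)
      = cohomologyRes Q.subtype n (cohomologyRes (MulAction.toPermHom P P) n x) :=
  stmt_2_general p P n x Q ψ hψ
end
end

section
/- Let T be a simple graph which is a tree (connected and acyclic), let Γ be a group acting on T by graph automorphisms in such a way that no element of Γ reverses an edge (i.e. for no γ ∈ Γ and adjacent vertices v, w does γ·v = w and γ·w = v), and suppose there is a positive integer M such that the stabilizer in Γ of every vertex of T is finite of order dividing M. Then there exists a group homomorphism f from Γ to the symmetric group on M letters whose kernel K is torsion-free; moreover K is a free group. -/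
/-!
The homomorphism is the holonomy of a `Γ`-equivariant flat bundle of `M`-element sets over the
tree. A stabilizer `Γ_v` of order dividing `M` acts freely on `Fin M` (as `M / |Γ_v|` copies of
its regular action); spreading these actions along the orbits gives a cocycle
`a : Γ → V → Perm (Fin M)` that is free at fixed points. On an edge `{v, w}` the two free actions
of `Γ_v ∩ Γ_w` on `Fin M` are conjugate; choosing conjugators at orbit representatives of edges,
oriented `Γ`-invariantly (possible because no edge is inverted), gives an equivariant flat
connection, whose parallel transport `τ` along the tree is path independent. Then
`f γ = τ (γ v) v₀ * a γ v * (τ v v₀)⁻¹` does not depend on `v`, is a homomorphism, and is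
injective on every vertex stabilizer, so the kernel acts freely on `T`.

A finite-order `γ` acting without inversions fixes a vertex: if `v` minimizes the displacement
`d > 0`, a geodesic `p` from `v` to `γ v` does not backtrack where it meets `γ p`, so
`p, γ p, …, γ^(n-1) p` (with `n` the order of `γ`) is a closed non-backtracking walk of length
`n d`, impossible in a tree. Hence the kernel is torsion-free. Finally, a group `K` acting freely
and without inversions on a tree is free: the quotient by `K` of the pair groupoid of the tree is a
connected groupoid, free on the oriented edges at orbit representatives, whose vertex groups are
copies of `K`.
-/

open SimpleGraph MulAction

namespace SimpleGraph

variable {V V' : Type*} {G : SimpleGraph V} {G' : SimpleGraph V'} {X : Type*} [Group X]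

namespace Walk

-- `ℓ u v` is the transport from the fibre over `u` to the fibre over `v`; they compose leftwards.
def transport (ℓ : V → V → X) : ∀ {u v : V}, G.Walk u v → X
  | _, _, nil => 1
  | u, _, cons (v := w) _ p => p.transport ℓ * ℓ u w

variable (ℓ : V → V → X)

@[simp] lemma transport_nil {u : V} : (nil : G.Walk u u).transport ℓ = 1 := rfl

@[simp] lemma transport_cons {u v w : V} (h : G.Adj u v) (p : G.Walk v w) :
    (cons h p).transport ℓ = p.transport ℓ * ℓ u v := rfl

lemma transport_append {u v w : V} (p : G.Walk u v) (q : G.Walk v w) :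
    (p.append q).transport ℓ = q.transport ℓ * p.transport ℓ := by
  induction p with
  | nil => simp
  | cons h p ih => simp [ih, mul_assoc]

lemma transport_map (ℓ' : V' → V' → X) (f : G →g G') (c : V → X)
    (hℓ : ∀ v w, G.Adj v w → ℓ' (f v) (f w) * c v = c w * ℓ v w) {u v : V}
    (p : G.Walk u v) : (p.map f).transport ℓ' * c u = c v * p.transport ℓ := by
  induction p with
  | nil => simp
  | cons h p ih => rw [map_cons, transport_cons, transport_cons, mul_assoc, hℓ _ _ h,
      ← mul_assoc, ih, mul_assoc]

lemma transport_eq_of_trans (σ : V → V → X) (hσ : ∀ u v w, σ v w * σ u v = σ u w)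
    (hℓ : ∀ v w, G.Adj v w → ℓ v w = σ v w) {u v : V} (p : G.Walk u v) :
    p.transport ℓ = σ u v := by
  induction p with
  | @nil w => exact (mul_eq_left.mp (hσ w w w)).symm
  | cons h p ih => rw [transport_cons, ih, hℓ _ _ h, hσ]

end Walk

namespace IsAcyclic

variable {ℓ : V → V → X}

lemma transport_bypass [DecidableEq V] (hG : G.IsAcyclic)
    (hℓ : ∀ v w, G.Adj v w → ℓ w v = (ℓ v w)⁻¹) {u v : V} (p : G.Walk u v) :
    p.bypass.transport ℓ = p.transport ℓ := by
  induction p with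
  | nil => rfl
  | @cons u w v h p ih =>
    rw [Walk.bypass]
    split_ifs with hu
    · have hback : p.bypass.takeUntil u hu = Walk.cons h.symm Walk.nil :=
        congrArg Subtype.val <| (hG.subsingleton_path _ _).elim
          ⟨_, p.bypass_isPath.takeUntil hu⟩ (Path.singleton h.symm)
      have hsplit := congrArg (Walk.transport ℓ) (p.bypass.take_spec hu)
      rw [Walk.transport_append, hback] at hsplit
      simp only [Walk.transport_cons, Walk.transport_nil, one_mul, hℓ _ _ h] at hsplit
      rw [Walk.transport_cons, ← ih, ← hsplit, inv_mul_cancel_right]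
    · rw [Walk.transport_cons, Walk.transport_cons, ih]

lemma transport_eq (hG : G.IsAcyclic) (hℓ : ∀ v w, G.Adj v w → ℓ w v = (ℓ v w)⁻¹)
    {u v : V} (p q : G.Walk u v) : p.transport ℓ = q.transport ℓ := by
  classical
  have := (hG.subsingleton_path u v).elim ⟨_, p.bypass_isPath⟩ ⟨_, q.bypass_isPath⟩
  rw [← hG.transport_bypass hℓ p, ← hG.transport_bypass hℓ q]
  exact congrArg (fun r : G.Path u v => r.1.transport ℓ) this

end IsAcyclic

namespace IsTree

variable {T : SimpleGraph V} (hT : T.IsTree) (ℓ : V → V → X)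

noncomputable def transport (u v : V) : X := (hT.connected u v).some.transport ℓ

variable {ℓ} (hℓ : ∀ v w, T.Adj v w → ℓ w v = (ℓ v w)⁻¹)
include hℓ

lemma transport_eq_walk {u v : V} (p : T.Walk u v) : hT.transport ℓ u v = p.transport ℓ :=
  hT.isAcyclic.transport_eq hℓ _ _

lemma transport_trans (u v w : V) :
    hT.transport ℓ v w * hT.transport ℓ u v = hT.transport ℓ u w := by
  obtain ⟨p⟩ := hT.connected u v
  obtain ⟨q⟩ := hT.connected v w
  rw [hT.transport_eq_walk hℓ p, hT.transport_eq_walk hℓ q,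
    hT.transport_eq_walk hℓ (p.append q), Walk.transport_append]

lemma transport_of_adj {u v : V} (h : T.Adj u v) : hT.transport ℓ u v = ℓ u v := by
  simp [hT.transport_eq_walk hℓ (Walk.cons h Walk.nil)]

lemma transport_self (v : V) : hT.transport ℓ v v = 1 :=
  hT.transport_eq_walk hℓ Walk.nil

lemma transport_map (f : T →g T) (c : V → X)
    (hf : ∀ v w, T.Adj v w → ℓ (f v) (f w) * c v = c w * ℓ v w) (u v : V) :
    hT.transport ℓ (f u) (f v) * c u = c v * hT.transport ℓ u v := by
  obtain ⟨p⟩ := hT.connected u v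
  rw [hT.transport_eq_walk hℓ p, hT.transport_eq_walk hℓ (p.map f),
    Walk.transport_map ℓ ℓ f c hf]

lemma transport_map_eq (f : T →g T) (hf : ∀ v w, T.Adj v w → ℓ (f v) (f w) = ℓ v w)
    (u v : V) : hT.transport ℓ (f u) (f v) = hT.transport ℓ u v := by
  simpa using hT.transport_map hℓ f 1 (by simpa using hf) u v

end IsTree

section FixedPoint

variable {T : SimpleGraph V} {Γ : Type*} [Group Γ] [MulAction Γ V]

abbrev smulHom {γ : Γ} (hγ : ∀ v w, T.Adj v w → T.Adj (γ • v) (γ • w)) : T →g T :=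
  ⟨(γ • ·), hγ _ _⟩

@[simp] lemma smulHom_apply {γ : Γ} (hγ : ∀ v w, T.Adj v w → T.Adj (γ • v) (γ • w)) (v : V) :
    smulHom hγ v = γ • v := rfl

lemma exists_isChain_walk_pow_smul {γ : Γ} (hγ : ∀ v w, T.Adj v w → T.Adj (γ • v) (γ • w))
    {v : V} (p : T.Walk v (γ • v)) (hp : p.edges.IsChain (· ≠ ·))
    (hseam : ∀ e ∈ p.edges.getLast?, ∀ e' ∈ p.edges.head?, e ≠ e'.map (γ • ·)) (n : ℕ) :
    ∃ q : T.Walk v (γ ^ (n + 1) • v), q.edges.IsChain (· ≠ ·) ∧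
      q.length = (n + 1) * p.length ∧ q.edges.head? = p.edges.head? := by
  induction n with
  | zero => exact ⟨p.copy rfl (by rw [zero_add, pow_one]), by simpa using hp, by simp, by simp⟩
  | succ n ih =>
    obtain ⟨q, hq, hlen, hhead⟩ := ih
    rw [pow_succ', mul_smul]
    have hmap : (q.map (smulHom hγ)).edges = q.edges.map (Sym2.map (γ • ·)) := Walk.edges_map ..
    refine ⟨p.append (q.map (smulHom hγ)), ?_, ?_, ?_⟩
    · rw [Walk.edges_append, hmap]
      refine hp.append ((List.isChain_map _).2 (hq.imp fun e e' h => ?_)) ?_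
      · exact (Sym2.map.injective (MulAction.injective γ)).ne h
      · intro e he e'' he''
        rw [List.head?_map, hhead] at he''
        obtain ⟨e', he', rfl⟩ := Option.mem_map.1 he''
        exact hseam e he e' he'
    · simp [hlen]; ring
    · rw [Walk.edges_append, hmap]
      cases h : p.edges with
      | nil => simp [hhead, h]
      | cons e l => simp

lemma getLast_edges_ne_map_head_edges {γ : Γ}
    (hninv : ∀ v w, T.Adj v w → ¬(γ • v = w ∧ γ • w = v)) {v : V} (hv : γ • v ≠ v)
    (hmin : ∀ w, T.dist v (γ • v) ≤ T.dist w (γ • w)) (p : T.Walk v (γ • v))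
    (hp : p.length = T.dist v (γ • v)) :
    ∀ e ∈ p.edges.getLast?, ∀ e' ∈ p.edges.head?, e ≠ e'.map (γ • ·) := by
  have hnil : ¬p.Nil := fun h => hv (Walk.Nil.eq h).symm
  have hne : p.edges ≠ [] := Walk.edges_eq_nil.not.mpr hnil
  intro e he e' he' heq
  rw [List.getLast?_eq_some_getLast hne, Option.mem_some_iff,
    Walk.getLast_edges_eq_mk_penultimate_end] at he
  rw [List.head?_eq_some_head hne, Option.mem_some_iff, Walk.head_edges_eq_mk_start_snd] at he'
  subst he he'
  have hsnd : γ • p.snd = p.penultimate := by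
    simp only [Sym2.map_mk, Sym2.eq_iff] at heq
    rcases heq with ⟨h1, -⟩ | ⟨h1, -⟩
    · exact absurd h1 (p.adj_penultimate hnil).ne
    · exact h1.symm
  have hlen : 1 ≤ p.length := Walk.not_nil_iff_lt_length.mp hnil
  rcases hlen.eq_or_lt with h1 | h2
  · have hs : p.snd = γ • v := by rw [Walk.snd, h1, Walk.getVert_length]
    have hp' : p.penultimate = v := by
      rw [Walk.penultimate, ← h1, Nat.sub_self, Walk.getVert_zero]
    exact hninv v (γ • v) (hs ▸ p.adj_snd hnil) ⟨rfl, by rw [← hs, hsnd, hp']⟩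
  · have hpen : p.tail.penultimate = p.penultimate := by
      simp only [Walk.penultimate, Walk.getVert_tail, Walk.length_tail]
      congr 1; omega
    have hshort := T.dist_le (p.tail.dropLast.copy rfl hpen)
    rw [Walk.length_copy, Walk.length_dropLast, Walk.length_tail] at hshort
    have := hmin p.snd
    rw [hsnd] at this
    omega

theorem IsTree.exists_smul_eq_self (hT : T.IsTree) {γ : Γ} (hγ : IsOfFinOrder γ)
    (hadj : ∀ v w, T.Adj v w → T.Adj (γ • v) (γ • w))
    (hninv : ∀ v w, T.Adj v w → ¬(γ • v = w ∧ γ • w = v)) : ∃ v : V, γ • v = v := by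
  by_contra! hfree
  have := hT.connected.nonempty
  set v := Function.argmin fun w => T.dist w (γ • w)
  obtain ⟨p, hp⟩ := hT.connected.exists_walk_length_eq_dist v (γ • v)
  have hpath := p.isPath_of_length_eq_dist hp
  have hmin w : T.dist v (γ • v) ≤ T.dist w (γ • w) :=
    Function.argmin_le (fun w => T.dist w (γ • w)) w
  obtain ⟨q, hq, hlen, -⟩ := exists_isChain_walk_pow_smul hadj p
    ((hT.isAcyclic.isPath_iff_isChain p).mp hpath)
    (getLast_edges_ne_map_head_edges hninv (hfree v) hmin p hp) (orderOf γ - 1)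
  have hloop : γ ^ (orderOf γ - 1 + 1) • v = v := by
    rw [Nat.sub_add_cancel hγ.orderOf_pos, pow_orderOf_eq_one, one_smul]
  have hqpath := (hT.isAcyclic.isPath_iff_isChain (q.copy rfl hloop)).mpr (by simpa using hq)
  have := Walk.length_eq_zero_iff.mpr (Walk.isPath_iff_nil.mp hqpath)
  rw [Walk.length_copy, hlen, Nat.sub_add_cancel hγ.orderOf_pos] at this
  have hp0 : p.length ≠ 0 := fun h => hfree v (Walk.eq_of_length_eq_zero h).symm
  simp [hγ.orderOf_pos.ne', hp0] at this

end FixedPoint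

end SimpleGraph

lemma exists_orbit_section (Γ X : Type*) [Group Γ] [MulAction Γ X] :
    ∃ (rep : X → X) (g : X → Γ), (∀ (γ : Γ) x, rep (γ • x) = rep x) ∧ ∀ x, g x • rep x = x := by
  classical
  refine ⟨fun x => (Quotient.mk (orbitRel Γ X) x).out,
    fun x => (Quotient.exact (Quotient.out_eq (Quotient.mk (orbitRel Γ X) x))).choose⁻¹,
    fun γ x => congrArg Quotient.out (Quotient.sound ⟨γ, rfl⟩), fun x => ?_⟩
  rw [inv_smul_eq_iff]
  exact (Quotient.exact (Quotient.out_eq (Quotient.mk (orbitRel Γ X) x))).choose_spec.symm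

section Orientation

variable {V Γ : Type*} [Group Γ] [MulAction Γ V]

theorem exists_invariant_orientation (R : V → V → Prop)
    (hninv : ∀ (γ : Γ) v w, R v w → ¬(γ • v = w ∧ γ • w = v)) :
    ∃ O : V → V → Prop, (∀ (γ : Γ) v w, O (γ • v) (γ • w) ↔ O v w) ∧
      ∀ v w, R v w → (O v w ↔ ¬O w v) := by
  classical
  -- orient `(v, w)` when its orbit comes first in a well-order; since no edge is inverted, the
  -- orbits of `(v, w)` and `(w, v)` differ
  let _ : LinearOrder (orbitRel.Quotient Γ (V × V)) := linearOrderOfSTO WellOrderingRel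
  let c : V → V → orbitRel.Quotient Γ (V × V) := fun v w => Quotient.mk _ (v, w)
  have hc : ∀ (γ : Γ) v w, c (γ • v) (γ • w) = c v w := fun γ v w =>
    Quotient.sound ⟨γ, rfl⟩
  refine ⟨fun v w => c v w < c w v, fun γ v w => by simp only [hc], fun v w h => ?_⟩
  have hne : c v w ≠ c w v := fun heq => by
    obtain ⟨γ, hγ⟩ := Quotient.exact heq
    exact hninv γ v w h ⟨congrArg Prod.snd hγ, congrArg Prod.fst hγ⟩
  exact ⟨lt_asymm, fun h' => (not_lt.mp h').lt_of_ne hne⟩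

end Orientation

section FreeActions

variable {H : Type*} [Group H]

theorem exists_free_hom_perm_fin [Finite H] {M : ℕ} (hM : Nat.card H ∣ M) :
    ∃ ρ : H →* Equiv.Perm (Fin M), ∀ h z, ρ h z = z → h = 1 := by
  obtain ⟨m, rfl⟩ := hM
  let e : H × Fin m ≃ Fin (Nat.card H * m) :=
    ((Finite.equivFin H).prodCongr (Equiv.refl _)).trans finProdFinEquiv
  refine ⟨MonoidHom.mk' (fun h => e.permCongr ((Equiv.mulLeft h).prodCongr (Equiv.refl _)))
    fun g h => by ext; simp [mul_assoc]; rfl, fun h z hz => ?_⟩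
  have : h * (e.symm z).1 = (e.symm z).1 := by
    simpa using congrArg (fun z => (e.symm z).1) hz
  simpa using this

section

variable (H) (Ω : Type*) [MulAction H Ω] [IsCancelSMul H Ω]

noncomputable def orbitsProdEquiv : orbitRel.Quotient H Ω × H ≃ Ω :=
  Equiv.ofBijective (fun p => p.2 • p.1.out) <| by
    constructor
    · rintro ⟨q, g⟩ ⟨q', g'⟩ h
      have hq : q = q' := by
        rw [← q.out_eq, ← q'.out_eq]
        exact Quotient.sound ⟨g⁻¹ * g', by simp only at h ⊢; rw [mul_smul, ← h, inv_smul_smul]⟩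
      subst hq
      exact Prod.ext rfl (IsCancelSMul.right_cancel _ _ _ h)
    · intro x
      obtain ⟨g, hg⟩ := Quotient.exact (Quotient.out_eq (Quotient.mk (orbitRel H Ω) x))
      exact ⟨(Quotient.mk _ x, g⁻¹), by simp [← hg]⟩

end

theorem exists_equiv_comm_of_free [Finite H] {Ω₁ Ω₂ : Type*} [Finite Ω₁] [Finite Ω₂]
    (ρ₁ : H →* Equiv.Perm Ω₁) (ρ₂ : H →* Equiv.Perm Ω₂)
    (h₁ : ∀ h z, ρ₁ h z = z → h = 1) (h₂ : ∀ h z, ρ₂ h z = z → h = 1)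
    (hcard : Nat.card Ω₁ = Nat.card Ω₂) :
    ∃ e : Ω₁ ≃ Ω₂, ∀ h z, e (ρ₁ h z) = ρ₂ h (e z) := by
  let _ := MulAction.compHom Ω₁ ρ₁
  let _ := MulAction.compHom Ω₂ ρ₂
  have : IsCancelSMul H Ω₁ := isCancelSMul_iff_eq_one_of_smul_eq.mpr h₁
  have : IsCancelSMul H Ω₂ := isCancelSMul_iff_eq_one_of_smul_eq.mpr h₂
  obtain ⟨σ⟩ : Nonempty (orbitRel.Quotient H Ω₁ ≃ orbitRel.Quotient H Ω₂) := by
    refine Finite.card_eq.mp (Nat.eq_of_mul_eq_mul_right (Nat.card_pos (α := H)) ?_)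
    rw [← Nat.card_prod, ← Nat.card_prod, Nat.card_congr (orbitsProdEquiv H Ω₁),
      Nat.card_congr (orbitsProdEquiv H Ω₂), hcard]
  refine ⟨(orbitsProdEquiv H Ω₁).symm.trans ((σ.prodCongr (Equiv.refl H)).trans
    (orbitsProdEquiv H Ω₂)), fun h z => ?_⟩
  obtain ⟨⟨q, g⟩, rfl⟩ := (orbitsProdEquiv H Ω₁).surjective z
  have hz : ρ₁ h (orbitsProdEquiv H Ω₁ (q, g)) = orbitsProdEquiv H Ω₁ (q, h * g) :=
    (mul_smul h g q.out).symm
  simp only [Equiv.trans_apply, hz, Equiv.symm_apply_apply, Equiv.prodCongr_apply,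
    Prod.map, Equiv.refl_apply]
  exact mul_smul h g _

end FreeActions

section Cocycles

variable {Γ V X : Type*} [Group Γ] [MulAction Γ V] [Group X]

theorem exists_free_cocycle {Ω : Type*}
    (hρ : ∀ v : V, ∃ ρ : stabilizer Γ v →* Equiv.Perm Ω, ∀ h z, ρ h z = z → h = 1) :
    ∃ a : Γ → V → Equiv.Perm Ω, (∀ γ δ v, a (γ * δ) v = a γ (δ • v) * a δ v) ∧
      ∀ γ v z, γ • v = v → a γ v z = z → γ = 1 := by
  classical
  choose ρ hρ using hρ
  obtain ⟨rep, g, hrep, hg⟩ := exists_orbit_section Γ V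
  -- `c γ v` is `γ` read in the stabilizer of the orbit representative of `v`
  let c : Γ → V → Γ := fun γ v => (g (γ • v))⁻¹ * γ * g v
  have hc_mem : ∀ γ v, c γ v • rep v = rep v := fun γ v => by
    rw [mul_smul, mul_smul, hg, inv_smul_eq_iff, ← hrep γ v, hg]
  have hc_mul : ∀ γ δ v, c (γ * δ) v = c γ (δ • v) * c δ v := fun γ δ v => by
    simp only [c, mul_smul]
    group
  let ρ' : V → Γ → Equiv.Perm Ω := fun u x => if h : x • u = u then ρ u ⟨x, h⟩ else 1
  have hρ' : ∀ u x (h : x • u = u), ρ' u x = ρ u ⟨x, h⟩ := fun u x h => dif_pos h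
  have hρ'_mul : ∀ u x y, x • u = u → y • u = u → ρ' u (x * y) = ρ' u x * ρ' u y := by
    intro u x y hx hy
    rw [hρ' u x hx, hρ' u y hy, hρ' u (x * y) (by rw [mul_smul, hy, hx]), ← map_mul]
    rfl
  refine ⟨fun γ v => ρ' (rep v) (c γ v), fun γ δ v => ?_, fun γ v z hv hz => ?_⟩
  · have h1 := hc_mem γ (δ • v)
    rw [hrep] at h1
    change ρ' (rep v) (c (γ * δ) v) = ρ' (rep (δ • v)) (c γ (δ • v)) * ρ' (rep v) (c δ v)
    rw [hrep, hc_mul, hρ'_mul _ _ _ h1 (hc_mem δ v)]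
  · change ρ' (rep v) (c γ v) z = z at hz
    rw [hρ' _ _ (hc_mem γ v)] at hz
    have h1 := congrArg Subtype.val (hρ _ _ z hz)
    simp only [c, hv, OneMemClass.coe_one] at h1
    rwa [mul_assoc, inv_mul_eq_one, eq_comm, mul_eq_right] at h1

variable {a : Γ → V → X} (ha : ∀ γ δ v, a (γ * δ) v = a γ (δ • v) * a δ v)
include ha

def cocycleHom (S : Subgroup Γ) (v : V) (hS : ∀ γ ∈ S, γ • v = v) : S →* X :=
  MonoidHom.mk' (fun γ => a γ v) fun γ δ => by
    simp only [Subgroup.coe_mul, ha, hS δ δ.2]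

theorem exists_equivariant_transport
    (hfix : ∀ v w, ∃ x : X, ∀ γ : Γ, γ • v = v → γ • w = w → x * a γ v = a γ w * x) :
    ∃ t : V → V → X, ∀ γ v w, t (γ • v) (γ • w) * a γ v = a γ w * t v w := by
  obtain ⟨rep, g, hrep, hg⟩ := exists_orbit_section Γ (V × V)
  choose x hx using fun e : V × V => hfix e.1 e.2
  let t : V × V → X := fun e =>
    a (g e) (rep e).2 * x (rep e) * (a (g e) (rep e).1)⁻¹
  -- any `k` carrying `rep e` to `e` gives the same value, since `x (rep e)` commutes with the
  -- stabilizer of `rep e`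
  have ht : ∀ e (k : Γ), k • rep e = e →
      t e = a k (rep e).2 * x (rep e) * (a k (rep e).1)⁻¹ := by
    intro e k hk
    set h := (g e)⁻¹ * k with hh
    have hfix : h • rep e = rep e := by rw [hh, mul_smul, hk, inv_smul_eq_iff, hg]
    obtain ⟨h1, h2⟩ := Prod.ext_iff.mp hfix
    simp only [Prod.smul_fst, Prod.smul_snd] at h1 h2
    have hk' : k = g e * h := by rw [hh]; group
    rw [hk', ha (g e) h, ha (g e) h, h1, h2]
    simp only [t, mul_inv_rev, mul_assoc]
    rw [← mul_assoc (a h _) (x _), ← hx (rep e) h h1 h2]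
    group
  refine ⟨fun v w => t (v, w), fun γ v w => ?_⟩
  have hγ : (γ * g (v, w)) • rep (γ • (v, w)) = γ • (v, w) := by
    rw [hrep, mul_smul, hg]
  obtain ⟨h1, h2⟩ := Prod.ext_iff.mp (hg (v, w))
  simp only [Prod.smul_fst, Prod.smul_snd] at h1 h2
  show t (γ • (v, w)) * a γ v = a γ w * t (v, w)
  rw [ht _ _ hγ, hrep, ha, ha, h1, h2]
  simp only [t]
  group

theorem exists_symmetric_equivariant_transport (R : V → V → Prop)
    (hninv : ∀ (γ : Γ) v w, R v w → ¬(γ • v = w ∧ γ • w = v))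
    (hfix : ∀ v w, ∃ x : X, ∀ γ : Γ, γ • v = v → γ • w = w → x * a γ v = a γ w * x) :
    ∃ t : V → V → X, (∀ γ v w, t (γ • v) (γ • w) * a γ v = a γ w * t v w) ∧
      ∀ v w, R v w → t w v = (t v w)⁻¹ := by
  classical
  obtain ⟨t, ht⟩ := exists_equivariant_transport ha hfix
  obtain ⟨O, hOinv, hO⟩ := exists_invariant_orientation R hninv
  refine ⟨fun v w => if O v w then t v w else (t w v)⁻¹, fun γ v w => ?_, fun v w h => ?_⟩
  · simp only [hOinv]
    split_ifs
    · exact ht γ v w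
    · rw [inv_mul_eq_iff_eq_mul, ← mul_assoc, ht γ w v]
      group
  · by_cases hvw : O v w
    · simp [hvw, (hO v w h).mp hvw]
    · simp [hvw, not_not.mp (mt (hO v w h).mpr hvw)]

theorem exists_hom_of_transport (τ : V → V → X) (hτ : ∀ u v w, τ v w * τ u v = τ u w)
    (hτa : ∀ γ v w, τ (γ • v) (γ • w) * a γ v = a γ w * τ v w) (v₀ : V) :
    ∃ f : Γ →* X, ∀ γ v, f γ = τ (γ • v) v₀ * a γ v * (τ v v₀)⁻¹ := by
  have hinv : ∀ u v, (τ u v)⁻¹ = τ v u := fun u v =>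
    inv_eq_of_mul_eq_one_right ((hτ v u v).trans (mul_eq_left.mp (hτ v v v)))
  have hf : ∀ γ v, τ (γ • v) v₀ * a γ v * (τ v v₀)⁻¹ = τ (γ • v₀) v₀ * a γ v₀ := fun γ v => by
    rw [hinv, mul_assoc, ← hτa, ← mul_assoc, hτ]
  refine ⟨MonoidHom.mk' (fun γ => τ (γ • v₀) v₀ * a γ v₀) fun γ δ => ?_,
    fun γ v => (hf γ v).symm⟩
  calc τ ((γ * δ) • v₀) v₀ * a (γ * δ) v₀
      = τ (γ • δ • v₀) v₀ * a γ (δ • v₀) * (τ (δ • v₀) v₀)⁻¹ * (τ (δ • v₀) v₀ * a δ v₀) := by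
        rw [mul_smul, ha]; group
    _ = _ := by rw [hf]

end Cocycles

section MainHom

variable {V Γ : Type*} {T : SimpleGraph V} [Group Γ] [MulAction Γ V]

theorem exists_intertwiner_of_free {Ω : Type*} [Finite Ω] {a : Γ → V → Equiv.Perm Ω}
    (ha : ∀ γ δ v, a (γ * δ) v = a γ (δ • v) * a δ v)
    (hafree : ∀ γ v z, γ • v = v → a γ v z = z → γ = 1)
    (hfin : ∀ v : V, Finite (stabilizer Γ v)) (v w : V) :
    ∃ x : Equiv.Perm Ω, ∀ γ : Γ, γ • v = v → γ • w = w → x * a γ v = a γ w * x := by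
  let S := stabilizer Γ v ⊓ stabilizer Γ w
  have : Finite S :=
    have := hfin v
    Finite.of_injective _ (Subgroup.inclusion_injective inf_le_left)
  obtain ⟨e, he⟩ := exists_equiv_comm_of_free (cocycleHom ha S v fun _ hγ => hγ.1)
    (cocycleHom ha S w fun _ hγ => hγ.2)
    (fun γ z hz => Subtype.ext (hafree γ v z γ.2.1 hz))
    (fun γ z hz => Subtype.ext (hafree γ w z γ.2.2 hz)) rfl
  exact ⟨e, fun γ hv hw => Equiv.ext fun z => he ⟨γ, hv, hw⟩ z⟩

theorem exists_hom_perm_fin_with_free_kernel (hT : T.IsTree)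
    (hadj : ∀ (γ : Γ) v w, T.Adj v w → T.Adj (γ • v) (γ • w))
    (hninv : ∀ (γ : Γ) v w, T.Adj v w → ¬(γ • v = w ∧ γ • w = v))
    {M : ℕ} (hM : 0 < M) (hfin : ∀ v : V, Finite (stabilizer Γ v))
    (hstab : ∀ v : V, Nat.card (stabilizer Γ v) ∣ M) :
    ∃ f : Γ →* Equiv.Perm (Fin M), ∀ γ (v : V), γ • v = v → f γ = 1 → γ = 1 := by
  obtain ⟨a, ha, hafree⟩ := exists_free_cocycle (Ω := Fin M) fun v =>
    have := hfin v; exists_free_hom_perm_fin (hstab v)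
  obtain ⟨t, ht, htsymm⟩ := exists_symmetric_equivariant_transport ha T.Adj hninv
    (exists_intertwiner_of_free ha hafree hfin)
  obtain ⟨v₀⟩ := hT.connected.nonempty
  obtain ⟨f, hf⟩ := exists_hom_of_transport ha (hT.transport t) (hT.transport_trans htsymm)
    (fun γ => hT.transport_map htsymm (smulHom (hadj γ)) (a γ) fun v w _ => ht γ v w) v₀
  refine ⟨f, fun γ v hv hγ => hafree γ v ⟨0, hM⟩ hv ?_⟩
  rw [hf γ v, hv, conj_eq_one_iff] at hγ
  rw [hγ]
  rfl

end MainHom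

open CategoryTheory

universe u

section FreeAction

variable {K V : Type u} [Group K] [MulAction K V]

-- the element carrying `w` to `v`, with junk value `1` when `v` is not in the orbit of `w`
open Classical in
noncomputable def smulDiff (v w : V) : K := if h : ∃ k : K, k • w = v then h.choose else 1

lemma smulDiff_smul {v w : V} (h : ∃ k : K, k • w = v) : (smulDiff v w : K) • w = v := by
  rw [smulDiff, dif_pos h]
  exact h.choose_spec

lemma smulDiff_eq [IsCancelSMul K V] {v w : V} {k : K} (hk : k • w = v) : smulDiff v w = k :=
  IsCancelSMul.right_cancel _ _ w ((smulDiff_smul ⟨k, hk⟩).trans hk.symm)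

/- Objects are the `K`-orbits of vertices; a morphism `x ⟶ y` is a vertex `w` in the orbit `y`,
standing for the `K`-orbit of the pair `(rep x, w)`. -/
variable (K V) in
def OrbitGroupoid : Type u := orbitRel.Quotient K V

namespace OrbitGroupoid

def mk (v : V) : OrbitGroupoid K V := Quotient.mk _ v

noncomputable def rep (x : OrbitGroupoid K V) : V := Quotient.out (s := orbitRel K V) x

lemma mk_rep (x : OrbitGroupoid K V) : mk (rep x) = x := Quotient.out_eq x

lemma mk_smul (k : K) (v : V) : (mk (k • v) : OrbitGroupoid K V) = mk v :=
  Quotient.sound ⟨k, rfl⟩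

lemma exists_smul_of_mk_eq {v w : V} (h : (mk v : OrbitGroupoid K V) = mk w) :
    ∃ k : K, k • w = v :=
  Quotient.exact h

def Hom (_ y : OrbitGroupoid K V) : Type u := {w : V // mk w = y}

lemma smulDiff_smul_rep {x y : OrbitGroupoid K V} (p : Hom x y) :
    (smulDiff p.1 (rep y) : K) • rep y = p.1 :=
  smulDiff_smul (exists_smul_of_mk_eq (p.2.trans (mk_rep y).symm))

noncomputable def toRep (v : V) : K := smulDiff (rep (mk v : OrbitGroupoid K V)) v

lemma toRep_smul (v : V) : (toRep v : K) • v = rep (mk v : OrbitGroupoid K V) :=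
  smulDiff_smul (exists_smul_of_mk_eq (mk_rep _))

section Generators

variable (T : SimpleGraph V) (O : V → V → Prop)

def Gen (x y : OrbitGroupoid K V) : Type u :=
  {w : V // (T.Adj (rep x) w ∧ O (rep x) w) ∧ mk w = y}

variable {T O} (hadj : ∀ (k : K) v w, T.Adj v w → T.Adj (k • v) (k • w))
  (hOinv : ∀ (k : K) v w, O (k • v) (k • w) ↔ O v w)

noncomputable def genOf {v w : V} (h : T.Adj v w ∧ O v w) :
    Gen T O (mk v : OrbitGroupoid K V) (mk w) :=
  ⟨(toRep v : K) • w,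
    ⟨by simpa only [toRep_smul] using hadj (toRep v : K) v w h.1,
      by simpa only [toRep_smul] using (hOinv (toRep v : K) v w).2 h.2⟩, mk_smul _ _⟩

lemma label_congr {X : Type*} (f : ∀ ⦃x y : OrbitGroupoid K V⦄, Gen T O x y → X)
    {x x' y y' : OrbitGroupoid K V} (e : Gen T O x y) (e' : Gen T O x' y')
    (hx : x = x') (he : e.1 = e'.1) : f e = f e' := by
  subst hx
  obtain ⟨w, hw, rfl⟩ := e
  obtain ⟨w', hw', rfl⟩ := e'
  obtain rfl : w = w' := he
  rfl

variable {X : Type*} [Group X] (f : ∀ ⦃x y : OrbitGroupoid K V⦄, Gen T O x y → X)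

open Classical in
noncomputable def edgeLabel (v w : V) : X :=
  if h : T.Adj v w ∧ O v w then f (genOf hadj hOinv h)
  else if h' : T.Adj w v ∧ O w v then (f (genOf hadj hOinv h'))⁻¹ else 1

lemma edgeLabel_symm (hO : ∀ v w, T.Adj v w → (O v w ↔ ¬O w v)) (v w : V) (h : T.Adj v w) :
    edgeLabel hadj hOinv f w v = (edgeLabel hadj hOinv f v w)⁻¹ := by
  by_cases hvw : O v w
  · have hwv := (hO v w h).mp hvw
    simp [edgeLabel, h, h.symm, hvw, hwv]
  · have hwv : O w v := not_not.mp (mt (hO v w h).mpr hvw)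
    simp [edgeLabel, h, h.symm, hvw, hwv]

end Generators

variable [IsCancelSMul K V]

lemma toRep_smul_left (k : K) (v : V) : toRep (k • v) = toRep v * k⁻¹ := by
  rw [toRep, mk_smul]
  exact smulDiff_eq (by rw [mul_smul, inv_smul_smul, toRep_smul])

lemma toRep_rep (x : OrbitGroupoid K V) : toRep (rep x) = (1 : K) :=
  smulDiff_eq (by rw [one_smul, mk_rep])

noncomputable instance : Groupoid (OrbitGroupoid K V) where
  Hom := Hom
  id x := ⟨rep x, mk_rep x⟩
  comp {_ y _} p q := ⟨smulDiff p.1 (rep y) • q.1, by rw [mk_smul, q.2]⟩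
  id_comp {x _} p := Subtype.ext <| by
    change smulDiff (rep x) (rep x) • p.1 = p.1
    rw [smulDiff_eq (one_smul K _), one_smul]
  comp_id p := Subtype.ext (smulDiff_smul_rep p)
  assoc {_ y z _} p q r := Subtype.ext <| by
    change smulDiff (smulDiff p.1 (rep y) • q.1) (rep z) • r.1 = _ • smulDiff q.1 (rep z) • r.1
    rw [smulDiff_eq (k := smulDiff p.1 (rep y) * smulDiff q.1 (rep z))
      (by rw [mul_smul, smulDiff_smul_rep]), mul_smul]
  inv {x y} p := ⟨smulDiff (rep y) p.1 • rep x, by rw [mk_smul, mk_rep]⟩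
  inv_comp {x y} p := Subtype.ext <| by
    change smulDiff (smulDiff (rep y) p.1 • rep x) (rep x) • p.1 = rep y
    rw [smulDiff_eq rfl, smulDiff_smul (exists_smul_of_mk_eq ((mk_rep y).trans p.2.symm))]
  comp_inv {x y} p := Subtype.ext <| by
    change smulDiff p.1 (rep y) • smulDiff (rep y) p.1 • rep x = rep x
    have h : (smulDiff p.1 (rep y) * smulDiff (rep y) p.1 : K) • p.1 = p.1 := by
      rw [mul_smul, smulDiff_smul (exists_smul_of_mk_eq ((mk_rep y).trans p.2.symm)),
        smulDiff_smul_rep]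
    rw [← mul_smul, IsCancelSMul.eq_one_of_smul h, one_smul]

lemma comp_val {x y z : OrbitGroupoid K V} (p : x ⟶ y) (q : y ⟶ z) :
    (p ≫ q).1 = (smulDiff p.1 (rep y) : K) • q.1 := rfl

instance [Nonempty V] : IsConnected (OrbitGroupoid K V) :=
  have : Nonempty (OrbitGroupoid K V) := ⟨mk (Classical.arbitrary V)⟩
  zigzag_isConnected fun x y => .single (Or.inl ⟨(⟨rep y, mk_rep y⟩ : x ⟶ y)⟩)

noncomputable def endMulEquiv (x : OrbitGroupoid K V) : K ≃* End x :=
  MulEquiv.ofBijective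
    (MonoidHom.mk' (G := End x) (fun k => ⟨k⁻¹ • rep x, by rw [mk_smul, mk_rep]⟩) fun k k' =>
      Subtype.ext <| by
        change (k * k')⁻¹ • rep x = smulDiff (k'⁻¹ • rep x) (rep x) • k⁻¹ • rep x
        rw [smulDiff_eq rfl, mul_inv_rev, mul_smul])
    ⟨fun k k' h => inv_injective (IsCancelSMul.right_cancel _ _ _ (congrArg Subtype.val h)),
      fun p => ⟨(smulDiff p.1 (rep x))⁻¹, Subtype.ext <| by
        change (smulDiff p.1 (rep x))⁻¹⁻¹ • rep x = p.1
        rw [inv_inv, smulDiff_smul_rep]⟩⟩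

noncomputable def pairHom (v w : V) : (mk v : OrbitGroupoid K V) ⟶ mk w :=
  ⟨(toRep v : K) • w, mk_smul _ _⟩

lemma pairHom_comp (u v w : V) :
    (pairHom u v ≫ pairHom v w : (mk u : OrbitGroupoid K V) ⟶ mk w) = pairHom u w :=
  Subtype.ext <| by
    rw [comp_val]
    change smulDiff ((toRep u : K) • v) (rep (mk v : OrbitGroupoid K V)) • (toRep v : K) • w =
      (toRep u : K) • w
    rw [smulDiff_eq (k := toRep u * (toRep v)⁻¹) (by rw [mul_smul, ← toRep_smul v,
      inv_smul_smul]), ← mul_smul, inv_mul_cancel_right]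

variable {X : Type u} [Group X]

lemma map_congr (E : OrbitGroupoid K V ⥤ SingleObj X) {x x' y y' : OrbitGroupoid K V}
    (p : x ⟶ y) (p' : x' ⟶ y') (hx : x = x') (hp : p.1 = p'.1) : E.map p = E.map p' := by
  subst hx
  obtain ⟨w, rfl⟩ := p
  obtain ⟨w', rfl⟩ := p'
  obtain rfl : w = w' := hp
  rfl

lemma map_eq_map_pairHom (E : OrbitGroupoid K V ⥤ SingleObj X) {x y : OrbitGroupoid K V}
    (p : x ⟶ y) : E.map p = E.map (pairHom (rep x) p.1) :=
  map_congr E _ _ (mk_rep x).symm (by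
    change p.1 = (toRep (rep x) : K) • p.1
    rw [toRep_rep, one_smul])

lemma pairHom_self (v : V) : pairHom v v = 𝟙 (mk v : OrbitGroupoid K V) :=
  Subtype.ext (toRep_smul v)

lemma map_pairHom_trans (E : OrbitGroupoid K V ⥤ SingleObj X) (u v w : V) :
    E.map (pairHom v w) * E.map (pairHom u v) = E.map (pairHom u w) := by
  rw [← SingleObj.comp_as_mul, ← E.map_comp, pairHom_comp]

section Generators

variable {T : SimpleGraph V} {O : V → V → Prop}
  (hadj : ∀ (k : K) v w, T.Adj v w → T.Adj (k • v) (k • w))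
  (hOinv : ∀ (k : K) v w, O (k • v) (k • w) ↔ O v w)
  (f : ∀ ⦃x y : OrbitGroupoid K V⦄, Gen T O x y → X)

lemma edgeLabel_smul (k : K) (v w : V) :
    edgeLabel hadj hOinv f (k • v) (k • w) = edgeLabel hadj hOinv f v w := by
  have hadj_iff : ∀ v w, T.Adj (k • v) (k • w) ↔ T.Adj v w := fun v w =>
    ⟨fun h => by simpa using hadj k⁻¹ _ _ h, hadj k v w⟩
  have hgen : ∀ {v w : V} (h : T.Adj v w ∧ O v w)
      (h' : T.Adj (k • v) (k • w) ∧ O (k • v) (k • w)),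
      f (genOf hadj hOinv h') = f (genOf hadj hOinv h) := fun h h' =>
    label_congr f _ _ (mk_smul _ _) (by
      change (toRep (k • _) : K) • k • _ = (toRep _ : K) • _
      rw [toRep_smul_left, mul_smul, inv_smul_smul])
  unfold edgeLabel
  by_cases hvw : T.Adj v w ∧ O v w
  · rw [dif_pos hvw, dif_pos (by rwa [hadj_iff, hOinv]), hgen]
  · by_cases hwv : T.Adj w v ∧ O w v
    · rw [dif_neg hvw, dif_neg (by rwa [hadj_iff, hOinv]), dif_pos hwv,
        dif_pos (by rwa [hadj_iff, hOinv]), hgen]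
    · rw [dif_neg hvw, dif_neg (by rwa [hadj_iff, hOinv]), dif_neg hwv,
        dif_neg (by rwa [hadj_iff, hOinv])]

lemma edgeLabel_gen {x y : OrbitGroupoid K V} (e : Gen T O x y) :
    edgeLabel hadj hOinv f (rep x) e.1 = f e := by
  rw [edgeLabel, dif_pos e.2.1]
  exact label_congr f _ _ (mk_rep x) (by
    change (toRep (rep x) : K) • e.1 = e.1
    rw [toRep_rep, one_smul])

lemma map_pairHom_of_adj (E : OrbitGroupoid K V ⥤ SingleObj X)
    (hE : ∀ x y (e : Gen T O x y), E.map (X := x) (Y := y) ⟨e.1, e.2.2⟩ = f e)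
    (hO : ∀ v w, T.Adj v w → (O v w ↔ ¬O w v)) {v w : V} (h : T.Adj v w) :
    E.map (pairHom v w) = edgeLabel hadj hOinv f v w := by
  by_cases hvw : O v w
  · rw [edgeLabel, dif_pos ⟨h, hvw⟩, ← hE]
    rfl
  · have hwv : O w v := not_not.mp (mt (hO v w h).mpr hvw)
    have hwv' : E.map (pairHom w v) = f (genOf hadj hOinv ⟨h.symm, hwv⟩) :=
      hE _ _ (genOf hadj hOinv ⟨h.symm, hwv⟩)
    rw [edgeLabel, dif_neg fun h' => hvw h'.2, dif_pos ⟨h.symm, hwv⟩, ← hwv',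
      eq_inv_iff_mul_eq_one, map_pairHom_trans, pairHom_self, E.map_id]
    rfl

variable (hT : T.IsTree) {ℓ : V → V → X} (hℓ : ∀ v w, T.Adj v w → ℓ w v = (ℓ v w)⁻¹)
  (hinv : ∀ (k : K) v w, ℓ (k • v) (k • w) = ℓ v w)

noncomputable def lift : OrbitGroupoid K V ⥤ SingleObj X where
  obj _ := SingleObj.star X
  map {x _} p := hT.transport ℓ (rep x) p.1
  map_id x := hT.transport_self hℓ (rep x)
  map_comp {x y _} p q := by
    have hk := hT.transport_map_eq hℓ (smulHom (hadj (smulDiff p.1 (rep y))))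
      (fun v w _ => hinv _ v w) (rep y) q.1
    simp only [smulHom_apply, smulDiff_smul_rep] at hk
    change hT.transport ℓ (rep x) (smulDiff p.1 (rep y) • q.1) =
      hT.transport ℓ (rep y) q.1 * hT.transport ℓ (rep x) p.1
    rw [← hk, hT.transport_trans hℓ]

end Generators

@[reducible] noncomputable def isFreeGroupoid {T : SimpleGraph V} (hT : T.IsTree)
    {O : V → V → Prop}
    (hadj : ∀ (k : K) v w, T.Adj v w → T.Adj (k • v) (k • w))
    (hOinv : ∀ (k : K) v w, O (k • v) (k • w) ↔ O v w)
    (hO : ∀ v w, T.Adj v w → (O v w ↔ ¬O w v)) : IsFreeGroupoid (OrbitGroupoid K V) where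
  quiverGenerators := ⟨Gen T O⟩
  of e := ⟨e.1, e.2.2⟩
  unique_lift f := by
    have hℓ := edgeLabel_symm hadj hOinv f hO
    refine ⟨lift hadj hT hℓ (edgeLabel_smul hadj hOinv f), fun x y e => ?_, fun E hE => ?_⟩
    · exact (hT.transport_of_adj hℓ e.2.1.1).trans (edgeLabel_gen hadj hOinv f e)
    · refine CategoryTheory.Functor.ext (fun _ => rfl) fun x y p => ?_
      obtain ⟨q⟩ := hT.connected (rep x) p.1
      have h := Walk.transport_eq_of_trans (edgeLabel hadj hOinv f)
        (fun v w => E.map (pairHom v w)) (map_pairHom_trans E)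
        (fun v w h => (map_pairHom_of_adj hadj hOinv f E hE hO h).symm) q
      simp only [eqToHom_refl, Category.comp_id, Category.id_comp]
      rw [map_eq_map_pairHom, ← h, ← hT.transport_eq_walk hℓ]
      rfl

end OrbitGroupoid

theorem SimpleGraph.IsTree.isFreeGroup_of_isCancelSMul [IsCancelSMul K V] {T : SimpleGraph V}
    (hT : T.IsTree) (hadj : ∀ (k : K) v w, T.Adj v w → T.Adj (k • v) (k • w))
    (hninv : ∀ (k : K) v w, T.Adj v w → ¬(k • v = w ∧ k • w = v)) : IsFreeGroup K := by
  obtain ⟨O, hOinv, hO⟩ := exists_invariant_orientation T.Adj hninv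
  let _ := OrbitGroupoid.isFreeGroupoid hT hadj hOinv hO
  have := hT.connected.nonempty
  exact IsFreeGroup.ofMulEquiv
    (OrbitGroupoid.endMulEquiv (OrbitGroupoid.mk (Classical.arbitrary V))).symm

end FreeAction

/-- If a group `Γ` acts on a tree `T` by graph automorphisms, without edge
inversions, with all vertex stabilizers finite of order dividing `M`, then
there is a homomorphism from `Γ` to the symmetric group on `M` letters whose
kernel is torsion-free; moreover the kernel is a free group. -/
theorem stmt_5 (V : Type) (T : SimpleGraph V) (hT : T.IsTree)
    (Γ : Type) [Group Γ] [MulAction Γ V]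
    (hadj : ∀ (γ : Γ) (v w : V), T.Adj v w → T.Adj (γ • v) (γ • w))
    (hninv : ∀ (γ : Γ) (v w : V), T.Adj v w → ¬(γ • v = w ∧ γ • w = v))
    (M : ℕ) (hM : 0 < M)
    (hfin : ∀ v : V, Finite (MulAction.stabilizer Γ v))
    (hstab : ∀ v : V, Nat.card (MulAction.stabilizer Γ v) ∣ M) :
    ∃ f : Γ →* Equiv.Perm (Fin M),
      (∀ g : f.ker, g ≠ 1 → ¬IsOfFinOrder g) ∧ IsFreeGroup f.ker := by
  obtain ⟨f, hf⟩ := exists_hom_perm_fin_with_free_kernel hT hadj hninv hM hfin hstab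
  have : IsCancelSMul f.ker V :=
    isCancelSMul_iff_eq_one_of_smul_eq.mpr fun k v hv => Subtype.ext (hf k v hv k.2)
  refine ⟨f, fun g hg hg_fin => hg ?_,
    hT.isFreeGroup_of_isCancelSMul (fun k => hadj k) (fun k => hninv k)⟩
  obtain ⟨v, hv⟩ := hT.exists_smul_eq_self hg_fin (hadj g) (hninv g)
  exact IsCancelSMul.eq_one_of_smul hv
end
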